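/- For the separable (classically entangled) state ω = Σ_n μ(n) ρ_n ⊗ σ_n on ℂ^m ⊗ ℂ^d with ρ_n = |n⟩⟨n| rank-one orthogonal projectors and marginal ρ = Σ_n μ(n)|n⟩⟨n|, the entangled entropy E = Tr ω log( ω^{1/2}(ρ⁻⊗I)ω^{1/2} ) equals −Σ_n μ(n) S(σ_n), and in particular E ≤ 0. -/

import Mathlib

/-!
Diagonalise each `σₐ = ∑ᵢ sₐᵢ |ψₐᵢ⟩⟨ψₐᵢ|`. The vectors `vₐ ⊗ ψₐᵢ` are orthonormal, and both
`ω` and `ρ ⊗ I` are diagonal in them, with weights `μₐ sₐᵢ` and `μₐ` (the latter because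
`∑ᵢ |ψₐᵢ⟩⟨ψₐᵢ| = I`). Along an orthonormal family `w`, the map `c ↦ ∑ₖ cₖ |wₖ⟩⟨wₖ|` is a
non-unital star-algebra homomorphism out of the functions on the index set, so it commutes with
the functional calculus of every `f` with `f 0 = 0`: square root, pseudoinverse and logarithm.
The Belavkin–Staszewski entropy of two such matrices is therefore the classical
`∑ₖ pₖ log (pₖ / qₖ)`, here `∑ₐ μₐ ∑ᵢ sₐᵢ log sₐᵢ`. It is nonpositive because the eigenvalues of
a density matrix lie in `[0, 1]`.
-/

open Matrix Kronecker
open scoped ComplexOrder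

noncomputable section
open Classical

/-- Hermitian functional calculus, extended by junk value `0` to non-Hermitian matrices. -/
def matCFC {d : Type*} [Fintype d] [DecidableEq d] (f : ℝ → ℝ)
    (A : Matrix d d ℂ) : Matrix d d ℂ :=
  if h : A.IsHermitian then h.cfc f else 0

/-- Matrix logarithm (spectral, with `Real.log 0 = 0` on the kernel). -/
def matLog {d : Type*} [Fintype d] [DecidableEq d] (A : Matrix d d ℂ) : Matrix d d ℂ :=
  matCFC Real.log A

/-- Moore–Penrose pseudoinverse of a Hermitian matrix (junk value `0` otherwise). -/
def matPinv {d : Type*} [Fintype d] [DecidableEq d] (A : Matrix d d ℂ) : Matrix d d ℂ :=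
  matCFC (·⁻¹) A

/-- Positive square root of a positive semidefinite matrix (junk value `0` otherwise). -/
def matSqrt {d : Type*} [Fintype d] [DecidableEq d] (A : Matrix d d ℂ) : Matrix d d ℂ :=
  if h : A.PosSemidef then h.1.cfc Real.sqrt else 0

/-- von Neumann entropy `-∑ λᵢ log λᵢ` (junk value `0` for non-Hermitian matrices). -/
def vN {d : Type*} [Fintype d] [DecidableEq d] (A : Matrix d d ℂ) : ℝ :=
  if h : A.IsHermitian then -∑ i, (h.eigenvalues i) * Real.log (h.eigenvalues i) else 0

/-- Belavkin–Staszewski relative entropy `Tr ω log(ω^{1/2} φ⁻ ω^{1/2})`. -/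
def RBS {d : Type*} [Fintype d] [DecidableEq d] (ω φ : Matrix d d ℂ) : ℝ :=
  ((ω * matLog (matSqrt ω * matPinv φ * matSqrt ω)).trace).re

/-- Partial trace over the second tensor factor. -/
def ptraceR {m n : Type*} [Fintype m] [Fintype n]
    (M : Matrix (m × n) (m × n) ℂ) : Matrix m m ℂ :=
  Matrix.of fun i j => ∑ k, M (i, k) (j, k)

/-- Partial trace over the first tensor factor. -/
def ptraceL {m n : Type*} [Fintype m] [Fintype n]
    (M : Matrix (m × n) (m × n) ℂ) : Matrix n n ℂ :=
  Matrix.of fun k l => ∑ i, M (i, k) (i, l)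


def OrthonormalFamily {n K : Type*} [Fintype n] [DecidableEq K] (w : K → n → ℂ) : Prop :=
  ∀ k l, star (w k) ⬝ᵥ w l = if k = l then 1 else 0

lemma star_vecMulVec_star_self {n : Type*} (x : n → ℂ) :
    star (vecMulVec x (star x)) = vecMulVec x (star x) := by
  rw [star_eq_conjTranspose, conjTranspose_vecMulVec, star_star]

lemma OrthonormalFamily.vecMulVec_mul_vecMulVec {n K : Type*} [Fintype n] [DecidableEq K]
    {w : K → n → ℂ} (hw : OrthonormalFamily w) (k l : K) :
    vecMulVec (w k) (star (w k)) * vecMulVec (w l) (star (w l)) =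
      if k = l then vecMulVec (w k) (star (w k)) else 0 := by
  rw [Matrix.vecMulVec_mul_vecMulVec, hw]
  split_ifs with h
  · rw [h, one_smul]
  · rw [zero_smul, vecMulVec_zero]

section RankOneSum
variable {n K : Type*} [Fintype n] [Fintype K] [DecidableEq K]

def rankOneSumHom (w : K → n → ℂ) (hw : OrthonormalFamily w) :
    (K → ℂ) →⋆ₙₐ[ℂ] Matrix n n ℂ where
  toFun c := ∑ k, c k • vecMulVec (w k) (star (w k))
  map_smul' r c := by simp [Finset.smul_sum, smul_smul]
  map_zero' := by simp
  map_add' c c' := by simp [add_smul, Finset.sum_add_distrib]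
  map_mul' c c' := by
    simp [Finset.sum_mul_sum, smul_smul, mul_comm, hw.vecMulVec_mul_vecMulVec]
  map_star' c := by
    simp [star_sum, star_smul, star_vecMulVec_star_self]

variable {w : K → n → ℂ} (hw : OrthonormalFamily w)

lemma rankOneSumHom_apply (c : K → ℂ) :
    rankOneSumHom w hw c = ∑ k, c k • vecMulVec (w k) (star (w k)) := rfl

lemma trace_rankOneSumHom (c : K → ℂ) : (rankOneSumHom w hw c).trace = ∑ k, c k := by
  simp [rankOneSumHom_apply, trace_sum, trace_vecMulVec, dotProduct_comm _ (star _), hw _ _]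

lemma posSemidef_rankOneSumHom {c : K → ℝ} (hc : ∀ k, 0 ≤ c k) :
    (rankOneSumHom w hw fun k => (c k : ℂ)).PosSemidef := by
  set r := rankOneSumHom w hw fun k => (Real.sqrt (c k) : ℂ)
  have hr : rᴴ = r := by
    rw [← star_eq_conjTranspose, ← map_star]
    congr 1; ext k; simp
  have hsq : (rankOneSumHom w hw fun k => (c k : ℂ)) = rᴴ * r := by
    rw [hr, ← map_mul]
    congr 1; ext k; simp [← Complex.ofReal_mul, Real.mul_self_sqrt (hc k)]
  rw [hsq]
  exact posSemidef_conjTranspose_mul_self r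

end RankOneSum

lemma Complex.quasispectrum_ofReal (r : ℝ) : quasispectrum ℝ (r : ℂ) = {r, 0} := by
  rw [quasispectrum_eq_spectrum_union_zero, ← Complex.coe_algebraMap, spectrum.scalar_eq]
  rfl

lemma Complex.finite_quasispectrum_ofReal (r : ℝ) : (quasispectrum ℝ (r : ℂ)).Finite := by
  rw [Complex.quasispectrum_ofReal]
  exact Set.toFinite _

lemma Complex.cfcₙ_ofReal {f : ℝ → ℝ} (hf : f 0 = 0) (r : ℝ) : cfcₙ f (r : ℂ) = f r := by
  rw [cfcₙ_eq_cfc ((Complex.finite_quasispectrum_ofReal r).continuousOn _),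
    ← Complex.coe_algebraMap, cfc_algebraMap]

lemma Pi.finite_quasispectrum_ofReal {K : Type*} [Finite K] (c : K → ℝ) :
    (quasispectrum ℝ fun k => (c k : ℂ)).Finite := by
  rw [quasispectrum_eq_spectrum_union_zero, Pi.spectrum_eq]
  refine (Set.finite_iUnion fun k => ?_).union (Set.finite_singleton 0)
  exact (Complex.finite_quasispectrum_ofReal (c k)).subset (spectrum_subset_quasispectrum ℝ _)

lemma Matrix.finite_real_quasispectrum {n : Type*} [Fintype n] [DecidableEq n]
    (A : Matrix n n ℂ) : (quasispectrum ℝ A).Finite := by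
  rw [quasispectrum_eq_spectrum_union_zero]
  exact A.finite_real_spectrum.union (Set.finite_singleton 0)

lemma cfc_rankOneSumHom {n K : Type*} [Fintype n] [DecidableEq n] [Fintype K] [DecidableEq K]
    {w : K → n → ℂ} (hw : OrthonormalFamily w) {f : ℝ → ℝ} (hf : f 0 = 0) (c : K → ℝ) :
    cfc f (rankOneSumHom w hw fun k => (c k : ℂ)) = rankOneSumHom w hw fun k => (f (c k) : ℂ) := by
  have hc : IsSelfAdjoint fun k => (c k : ℂ) := by
    ext k; simp
  have hcont : Continuous (rankOneSumHom w hw) :=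
    LinearMap.continuous_of_finiteDimensional (LinearMapClass.linearMap (rankOneSumHom w hw))
  have hcfc := cfcₙ_eq_cfc (f := f) (a := rankOneSumHom w hw fun k => (c k : ℂ))
    ((Matrix.finite_real_quasispectrum _).continuousOn _)
  have hmap := (rankOneSumHom w hw).map_cfcₙ f _
    ((Pi.finite_quasispectrum_ofReal c).continuousOn _) hf hcont hc (hc.map _)
  have hpi := cfcₙ_map_pi (S := ℂ) f (fun k => (c k : ℂ))
    ((Set.finite_iUnion fun k => Complex.finite_quasispectrum_ofReal (c k)).continuousOn _) hc
    (fun k => congrFun hc k)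
  rw [← hcfc, ← hmap, hpi]
  simp only [Complex.cfcₙ_ofReal hf]

section MatrixFunctions
variable {n : Type*} [Fintype n] [DecidableEq n]

lemma matCFC_eq_cfc (f : ℝ → ℝ) (A : Matrix n n ℂ) : matCFC f A = cfc f A := by
  by_cases hA : A.IsHermitian
  · rw [matCFC, dif_pos hA, hA.cfc_eq]
  · rw [matCFC, dif_neg hA, cfc_apply_of_not_predicate A (isHermitian_iff_isSelfAdjoint.not.mp hA)]

lemma matSqrt_eq_cfc {A : Matrix n n ℂ} (hA : A.PosSemidef) : matSqrt A = cfc Real.sqrt A := by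
  rw [matSqrt, dif_pos hA, hA.1.cfc_eq]

lemma vN_nonneg {A : Matrix n n ℂ} (hA : A.PosSemidef) (htr : A.trace = 1) : 0 ≤ vN A := by
  have hsum : ∑ i, hA.1.eigenvalues i = 1 := by
    have := hA.1.trace_eq_sum_eigenvalues
    rw [htr] at this
    simpa using congrArg Complex.re this.symm
  rw [vN, dif_pos hA.1, ← Finset.sum_neg_distrib]
  refine Finset.sum_nonneg fun i _ => ?_
  rw [← neg_mul]
  exact Real.negMulLog_nonneg (hA.eigenvalues_nonneg i)
    (hsum ▸ Finset.single_le_sum (fun j _ => hA.eigenvalues_nonneg j) (Finset.mem_univ i))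

end MatrixFunctions

lemma RBS_rankOneSumHom {n K : Type*} [Fintype n] [DecidableEq n] [Fintype K] [DecidableEq K]
    {w : K → n → ℂ} (hw : OrthonormalFamily w) {p : K → ℝ} (hp : ∀ k, 0 ≤ p k) (q : K → ℝ) :
    RBS (rankOneSumHom w hw fun k => (p k : ℂ)) (rankOneSumHom w hw fun k => (q k : ℂ)) =
      ∑ k, p k * Real.log (p k / q k) := by
  set Φ := rankOneSumHom w hw
  have hsqrt : matSqrt (Φ fun k => (p k : ℂ)) = Φ fun k => (Real.sqrt (p k) : ℂ) := by
    rw [matSqrt_eq_cfc (posSemidef_rankOneSumHom hw hp), cfc_rankOneSumHom hw Real.sqrt_zero]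
  have hpinv : matPinv (Φ fun k => (q k : ℂ)) = Φ fun k => ((q k)⁻¹ : ℝ) := by
    rw [matPinv, matCFC_eq_cfc, cfc_rankOneSumHom hw inv_zero]
  have hmid : matSqrt (Φ fun k => (p k : ℂ)) * matPinv (Φ fun k => (q k : ℂ)) *
      matSqrt (Φ fun k => (p k : ℂ)) = Φ fun k => (p k / q k : ℝ) := by
    rw [hsqrt, hpinv, ← map_mul, ← map_mul]
    congr 1; ext k
    simp only [Pi.mul_apply, ← Complex.ofReal_mul]
    rw [mul_right_comm, Real.mul_self_sqrt (hp k), div_eq_mul_inv]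
  rw [RBS, hmid, matLog, matCFC_eq_cfc, cfc_rankOneSumHom hw Real.log_zero, ← map_mul,
    trace_rankOneSumHom]
  simp only [Pi.mul_apply, ← Complex.ofReal_mul, ← Complex.ofReal_sum, Complex.ofReal_re]

section Columns
variable {n : Type*} [Fintype n] [DecidableEq n]

lemma orthonormalFamily_col_of_mem_unitary {U : Matrix n n ℂ}
    (hU : U ∈ unitary (Matrix n n ℂ)) : OrthonormalFamily fun i q => U q i := by
  intro i j
  have := congrFun (congrFun (Unitary.star_mul_self_of_mem (R := Matrix n n ℂ) hU) i) j
  rw [mul_apply, one_apply] at this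
  simpa [dotProduct, star_apply] using this

lemma mul_diagonal_mul_conjTranspose_eq_sum (U : Matrix n n ℂ) (s : n → ℂ) :
    U * diagonal s * Uᴴ = ∑ i, s i • vecMulVec (fun q => U q i) (star fun q => U q i) := by
  ext p q
  rw [mul_apply]
  simp only [mul_diagonal, conjTranspose_apply, Matrix.sum_apply, Matrix.smul_apply,
    vecMulVec_apply, Pi.star_apply, smul_eq_mul]
  exact Finset.sum_congr rfl fun j _ => by ring

lemma sum_vecMulVec_col_of_mem_unitary {U : Matrix n n ℂ} (hU : U ∈ unitary (Matrix n n ℂ)) :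
    ∑ i, vecMulVec (fun q => U q i) (star fun q => U q i) = 1 := by
  simpa [← star_eq_conjTranspose, Unitary.mul_star_self_of_mem hU] using
    (mul_diagonal_mul_conjTranspose_eq_sum U 1).symm

lemma Matrix.IsHermitian.eq_sum_eigenvalues_smul {A : Matrix n n ℂ} (hA : A.IsHermitian) :
    A = ∑ i, (hA.eigenvalues i : ℂ) • vecMulVec (fun q => hA.eigenvectorUnitary q i)
      (star fun q => hA.eigenvectorUnitary q i) := by
  conv_lhs => rw [hA.spectral_theorem, Unitary.conjStarAlgAut_apply, star_eq_conjTranspose]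
  exact mul_diagonal_mul_conjTranspose_eq_sum _ _

lemma orthonormalFamily_eigenvectorUnitary_col {A : Matrix n n ℂ} (hA : A.IsHermitian) :
    OrthonormalFamily fun i q => hA.eigenvectorUnitary q i :=
  orthonormalFamily_col_of_mem_unitary hA.eigenvectorUnitary.2

end Columns

lemma Matrix.kronecker_sum {ι l m n p α : Type*} [NonUnitalNonAssocSemiring α]
    (A : Matrix l m α) (s : Finset ι) (B : ι → Matrix n p α) :
    A ⊗ₖ (∑ i ∈ s, B i) = ∑ i ∈ s, A ⊗ₖ B i := by
  ext ⟨a, b⟩ ⟨c, d⟩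
  simp [Finset.mul_sum, Matrix.sum_apply]

lemma Matrix.sum_kronecker {ι l m n p α : Type*} [NonUnitalNonAssocSemiring α]
    (s : Finset ι) (A : ι → Matrix l m α) (B : Matrix n p α) :
    (∑ i ∈ s, A i) ⊗ₖ B = ∑ i ∈ s, A i ⊗ₖ B := by
  ext ⟨a, b⟩ ⟨c, d⟩
  simp [Finset.sum_mul, Matrix.sum_apply]

def kroneckerFamily {N I m d : Type*} (v : N → m → ℂ) (ψ : N → I → d → ℂ) :
    N × I → m × d → ℂ :=
  fun k pq => v k.1 pq.1 * ψ k.1 k.2 pq.2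

lemma OrthonormalFamily.kronecker {N I m d : Type*} [Fintype m] [Fintype d] [DecidableEq N]
    [DecidableEq I] {v : N → m → ℂ} {ψ : N → I → d → ℂ}
    (hv : OrthonormalFamily v) (hψ : ∀ a, OrthonormalFamily (ψ a)) :
    OrthonormalFamily (kroneckerFamily v ψ) := by
  rintro ⟨a, i⟩ ⟨b, j⟩
  have hsplit : star (kroneckerFamily v ψ (a, i)) ⬝ᵥ kroneckerFamily v ψ (b, j) =
      (star (v a) ⬝ᵥ v b) * (star (ψ a i) ⬝ᵥ ψ b j) := by
    simp only [kroneckerFamily, dotProduct, Pi.star_apply, star_mul', Fintype.sum_prod_type,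
      Finset.sum_mul_sum]
    exact Finset.sum_congr rfl fun _ _ => Finset.sum_congr rfl fun _ _ => by ring
  rw [hsplit, hv]
  by_cases hab : a = b
  · subst hab
    rw [hψ, if_pos rfl, one_mul]
    simp
  · simp [hab]

lemma vecMulVec_kroneckerFamily {N I m d : Type*} (v : N → m → ℂ) (ψ : N → I → d → ℂ)
    (a : N) (i : I) :
    vecMulVec (kroneckerFamily v ψ (a, i)) (star (kroneckerFamily v ψ (a, i))) =
      vecMulVec (v a) (star (v a)) ⊗ₖ vecMulVec (ψ a i) (star (ψ a i)) := by
  ext ⟨p, q⟩ ⟨p', q'⟩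
  simp only [kroneckerFamily, vecMulVec_apply, Pi.star_apply, star_mul', kroneckerMap_apply]
  ring

lemma rankOneSumHom_kroneckerFamily {N I m d : Type*} [Fintype N] [Fintype I] [Fintype m]
    [Fintype d] [DecidableEq N] [DecidableEq I] {v : N → m → ℂ} {ψ : N → I → d → ℂ}
    (hv : OrthonormalFamily v) (hψ : ∀ a, OrthonormalFamily (ψ a)) (c : N × I → ℂ) :
    rankOneSumHom _ (hv.kronecker hψ) c =
      ∑ a, vecMulVec (v a) (star (v a)) ⊗ₖ ∑ i, c (a, i) • vecMulVec (ψ a i) (star (ψ a i)) := by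
  simp only [rankOneSumHom_apply, Fintype.sum_prod_type, vecMulVec_kroneckerFamily,
    Matrix.kronecker_sum, kronecker_smul]

section ClassicalQuantum
variable {N m d : Type*} [Fintype N] [DecidableEq N] [Fintype m] [Fintype d] [DecidableEq d]
  {v : N → m → ℂ} {σ : N → Matrix d d ℂ}

lemma sum_smul_kronecker_eq_rankOneSumHom (hv : OrthonormalFamily v)
    (hσ : ∀ a, (σ a).IsHermitian) (μ : N → ℝ) :
    ∑ a, (μ a : ℂ) • (vecMulVec (v a) (star (v a)) ⊗ₖ σ a) =
      rankOneSumHom _ (hv.kronecker fun a => orthonormalFamily_eigenvectorUnitary_col (hσ a))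
        fun k => ((μ k.1 * (hσ k.1).eigenvalues k.2 : ℝ) : ℂ) := by
  rw [rankOneSumHom_kroneckerFamily hv fun a => orthonormalFamily_eigenvectorUnitary_col (hσ a)]
  refine Finset.sum_congr rfl fun a _ => ?_
  conv_lhs => rw [(hσ a).eq_sum_eigenvalues_smul]
  simp only [← kronecker_smul, Finset.smul_sum, smul_smul, Complex.ofReal_mul]

lemma sum_smul_kronecker_one_eq_rankOneSumHom (hv : OrthonormalFamily v)
    (hσ : ∀ a, (σ a).IsHermitian) (μ : N → ℝ) :
    (∑ a, (μ a : ℂ) • vecMulVec (v a) (star (v a))) ⊗ₖ (1 : Matrix d d ℂ) =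
      rankOneSumHom _ (hv.kronecker fun a => orthonormalFamily_eigenvectorUnitary_col (hσ a))
        fun k => ((μ k.1 : ℝ) : ℂ) := by
  rw [rankOneSumHom_kroneckerFamily hv fun a => orthonormalFamily_eigenvectorUnitary_col (hσ a),
    Matrix.sum_kronecker]
  refine Finset.sum_congr rfl fun a _ => ?_
  dsimp only
  rw [← Finset.smul_sum, sum_vecMulVec_col_of_mem_unitary (hσ a).eigenvectorUnitary.2,
    smul_kronecker, kronecker_smul]

end ClassicalQuantum

lemma sum_mul_mul_log_mul_div_left {N I : Type*} [Fintype N] [Fintype I] (μ : N → ℝ)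
    (s : N → I → ℝ) :
    ∑ k : N × I, μ k.1 * s k.1 k.2 * Real.log (μ k.1 * s k.1 k.2 / μ k.1) =
      ∑ a, μ a * ∑ i, s a i * Real.log (s a i) := by
  rw [Fintype.sum_prod_type]
  refine Finset.sum_congr rfl fun a _ => ?_
  rw [Finset.mul_sum]
  refine Finset.sum_congr rfl fun i _ => ?_
  -- for `μ a = 0` the junk value `log (0 / 0)` is multiplied by `0`
  rcases eq_or_ne (μ a) 0 with h | h
  · simp [h]
  · rw [mul_div_cancel_left₀ _ h, mul_assoc]

theorem stmt16_general {N m d : ℕ} (v : Fin N → (Fin m → ℂ))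
    (hv : ∀ a b, star (v a) ⬝ᵥ v b = if a = b then (1 : ℂ) else 0)
    (μ : Fin N → ℝ) (hμ : ∀ a, 0 ≤ μ a)
    (σ : Fin N → Matrix (Fin d) (Fin d) ℂ)
    (hσ : ∀ a, (σ a).PosSemidef) (hσtr : ∀ a, (σ a).trace = 1) :
    RBS (∑ a, (μ a : ℂ) • ((Matrix.of fun i j => v a i * star (v a j)) ⊗ₖ σ a))
        ((∑ a, (μ a : ℂ) • (Matrix.of fun i j : Fin m => v a i * star (v a j))) ⊗ₖ
          (1 : Matrix (Fin d) (Fin d) ℂ)) =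
      -∑ a, μ a * vN (σ a) ∧
    RBS (∑ a, (μ a : ℂ) • ((Matrix.of fun i j => v a i * star (v a j)) ⊗ₖ σ a))
        ((∑ a, (μ a : ℂ) • (Matrix.of fun i j : Fin m => v a i * star (v a j))) ⊗ₖ
          (1 : Matrix (Fin d) (Fin d) ℂ)) ≤ 0 := by
  have hσH : ∀ a, (σ a).IsHermitian := fun a => (hσ a).1
  set ω := ∑ a, (μ a : ℂ) • ((Matrix.of fun i j => v a i * star (v a j)) ⊗ₖ σ a)
  set φ := (∑ a, (μ a : ℂ) • (Matrix.of fun i j : Fin m => v a i * star (v a j))) ⊗ₖ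
    (1 : Matrix (Fin d) (Fin d) ℂ)
  have hW := OrthonormalFamily.kronecker (v := v) hv fun a =>
    orthonormalFamily_eigenvectorUnitary_col (hσH a)
  have hRBS : RBS ω φ = -∑ a, μ a * vN (σ a) := by
    rw [show ω = _ from sum_smul_kronecker_eq_rankOneSumHom hv hσH μ,
      show φ = _ from sum_smul_kronecker_one_eq_rankOneSumHom hv hσH μ,
      RBS_rankOneSumHom hW fun k => mul_nonneg (hμ k.1) ((hσ k.1).eigenvalues_nonneg k.2),
      sum_mul_mul_log_mul_div_left μ fun a => (hσH a).eigenvalues]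
    simp only [vN, dif_pos (hσH _), mul_neg, Finset.sum_neg_distrib, neg_neg]
  refine ⟨hRBS, ?_⟩
  rw [hRBS, neg_nonpos]
  exact Finset.sum_nonneg fun a _ => mul_nonneg (hμ a) (vN_nonneg (hσ a) (hσtr a))

theorem stmt16 {N m d : ℕ} (v : Fin N → (Fin m → ℂ))
    (hv : ∀ a b, star (v a) ⬝ᵥ v b = if a = b then (1 : ℂ) else 0)
    (μ : Fin N → ℝ) (hμ : ∀ a, 0 ≤ μ a) (hμ1 : ∑ a, μ a = 1)
    (σ : Fin N → Matrix (Fin d) (Fin d) ℂ)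
    (hσ : ∀ a, (σ a).PosSemidef) (hσtr : ∀ a, (σ a).trace = 1) :
    RBS (∑ a, (μ a : ℂ) • ((Matrix.of fun i j => v a i * star (v a j)) ⊗ₖ σ a))
        ((∑ a, (μ a : ℂ) • (Matrix.of fun i j : Fin m => v a i * star (v a j))) ⊗ₖ
          (1 : Matrix (Fin d) (Fin d) ℂ)) =
      -∑ a, μ a * vN (σ a) ∧
    RBS (∑ a, (μ a : ℂ) • ((Matrix.of fun i j => v a i * star (v a j)) ⊗ₖ σ a))
        ((∑ a, (μ a : ℂ) • (Matrix.of fun i j : Fin m => v a i * star (v a j))) ⊗ₖ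
          (1 : Matrix (Fin d) (Fin d) ℂ)) ≤ 0 :=
  stmt16_general v hv μ hμ σ hσ hσtr

end
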